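/- arXiv:1306.2622 — 2 statements merged into one kernel-verified Lean document; each statement's English description precedes it below -/
import Mathlib

section
/- Let G and H be finite groups. Then the set of all functions f from the set of subgroups of G×H to ℤ that arise as f(L) = |X^L| − |Y^L| for some orthogonal pair (X,Y) of finite bifree (G,H)-bisets is finite. (Since marks determine elements of the double Burnside group, this says that the set B°^Δ(G,H) of orthogonal elements is finite.) -/
open MulAction

/-- An isomorphism of `M`-sets: an equivariant bijection. -/
def IsoAsGSets (M X Y : Type*) [SMul M X] [SMul M Y] : Prop :=
  ∃ e : X ≃ Y, ∀ (m : M) (x : X), e (m • x) = m • e x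

/-- The twisted diagonal subgroup `Δ(R,α,S) = {(α s, s) | s ∈ S}` of `G × H`,
for an isomorphism `α : S ≃* R`. -/
def twistedDiagonal {G H : Type*} [Group G] [Group H] (R : Subgroup G) (S : Subgroup H)
    (α : S ≃* R) : Subgroup (G × H) :=
  ((R.subtype.comp α.toMonoidHom).prod S.subtype).range

/-- `Δ(G,φ,H) = {(φ h, h) | h ∈ H} ≤ G × H` for an isomorphism `φ : H ≃* G`. -/
def fullTwistedDiagonal {G H : Type*} [Group G] [Group H] (φ : H ≃* G) : Subgroup (G × H) :=
  (φ.toMonoidHom.prod (MonoidHom.id H)).range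

/-- The diagonal subgroup `Δ(R) = {(r,r) | r ∈ R} ≤ G × G`. -/
def diagSubgroup {G : Type*} [Group G] (R : Subgroup G) : Subgroup (G × G) :=
  (R.subtype.prod R.subtype).range

/-- A `(G,H)`-biset (i.e. a left `(G × H)`-set) is bifree if it is free as a left `G`-set
and free as a right `H`-set. -/
def IsBifree (G H X : Type*) [Group G] [Group H] [MulAction (G × H) X] : Prop :=
  (∀ (g : G) (x : X), (g, (1 : H)) • x = x → g = 1) ∧
  (∀ (h : H) (x : X), ((1 : G), h) • x = x → h = 1)

section Tensor

variable (G H K : Type*) [Group G] [Group H] [Group K]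
variable (X Y : Type*) [MulAction (G × H) X] [MulAction (H × K) Y]

/-- The relation on `X × Y` identifying `(x·h, y)` with `(x, h·y)`. -/
def bisetSetoid : Setoid (X × Y) where
  r p q := ∃ h : H, q.1 = ((1 : G), h) • p.1 ∧ q.2 = (h, (1 : K)) • p.2
  iseqv := by
    constructor
    · intro p
      exact ⟨1, by simp [Prod.mk_one_one], by simp [Prod.mk_one_one]⟩
    · rintro p q ⟨h, h1, h2⟩
      exact ⟨h⁻¹, by simp [h1, smul_smul, Prod.mk_one_one], by simp [h2, smul_smul, Prod.mk_one_one]⟩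
    · rintro p q r ⟨h, h1, h2⟩ ⟨h', h1', h2'⟩
      exact ⟨h' * h, by simp [h1, h1', smul_smul], by simp [h2, h2', smul_smul]⟩

/-- The tensor product `X ×_H Y` of a `(G,H)`-biset and an `(H,K)`-biset;
a `(G,K)`-biset. -/
def BisetTensor : Type _ :=
  Quotient (bisetSetoid G H K X Y)

variable {G H K X Y}

/-- The class of `(x, y)` in `X ×_H Y`. -/
def BisetTensor.mk (p : X × Y) : BisetTensor G H K X Y :=
  Quotient.mk (bisetSetoid G H K X Y) p

variable (G H K X Y)

instance : SMul (G × K) (BisetTensor G H K X Y) :=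
  ⟨fun a => Quotient.map (fun p => ((a.1, (1 : H)) • p.1, ((1 : H), a.2) • p.2))
    (by
      rintro p q ⟨h, h1, h2⟩
      exact ⟨h, by simp [h1, smul_smul], by simp [h2, smul_smul]⟩)⟩

variable {G H K X Y}

theorem BisetTensor.smul_mk (a : G × K) (p : X × Y) :
    a • (BisetTensor.mk p : BisetTensor G H K X Y) =
      BisetTensor.mk ((a.1, (1 : H)) • p.1, ((1 : H), a.2) • p.2) :=
  rfl

variable (G H K X Y)

instance : MulAction (G × K) (BisetTensor G H K X Y) where
  one_smul q := Quotient.inductionOn q fun p => by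
    refine Quotient.sound ⟨1, ?_, ?_⟩ <;> simp [Prod.mk_one_one]
  mul_smul a b q := Quotient.inductionOn q fun p => by
    refine Quotient.sound ⟨1, ?_, ?_⟩ <;> simp [smul_smul, Prod.mk_one_one]

end Tensor

section Op

/-- The opposite biset: a `(G,H)`-biset viewed as an `(H,G)`-biset via
`h · x · g := g⁻¹ · x · h⁻¹`. -/
def BisetOp (H G X : Type*) : Type _ := (fun _ _ => X) H G

instance BisetOp.instMulAction {G H : Type*} [Group G] [Group H] (X : Type*)
    [MulAction (G × H) X] : MulAction (H × G) (BisetOp H G X) :=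
  MulAction.compHom X (MulEquiv.prodComm : H × G ≃* G × H).toMonoidHom

instance BisetOp.instFinite {G H : Type*} (X : Type*) [Finite X] : Finite (BisetOp H G X) :=
  inferInstanceAs (Finite X)

end Op

section Grp

/-- The group `G` viewed as a `(G,G)`-biset via left and right multiplication. -/
structure BisetGrp (G : Type*) where
  /-- the underlying group element -/
  val : G

instance BisetGrp.instSMul {G : Type*} [Group G] : SMul (G × G) (BisetGrp G) :=
  ⟨fun p x => ⟨p.1 * x.val * p.2⁻¹⟩⟩

theorem BisetGrp.smul_def {G : Type*} [Group G] (p : G × G) (x : BisetGrp G) :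
    p • x = ⟨p.1 * x.val * p.2⁻¹⟩ := rfl

instance BisetGrp.instMulAction {G : Type*} [Group G] : MulAction (G × G) (BisetGrp G) where
  one_smul x := by
    cases x
    simp [BisetGrp.smul_def]
  mul_smul p q x := by
    cases x
    simp [BisetGrp.smul_def, mul_assoc]

instance BisetGrp.instFinite {G : Type*} [Finite G] : Finite (BisetGrp G) :=
  Finite.of_equiv G ⟨fun g => ⟨g⟩, fun x => x.val, fun _ => rfl, fun _ => rfl⟩

end Grp

/-- A pair `(X,Y)` of `(G,H)`-bisets is an orthogonal pair if
`(X ×_H X°) ⊔ (Y ×_H Y°) ≅ G ⊔ (X ×_H Y°) ⊔ (Y ×_H X°)` as `(G,G)`-bisets;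
this encodes the equation `([X] - [Y]) ·_H ([X] - [Y])° = [G]` in `B^Δ(G,G)`. -/
def IsOrthogonalPair (G H : Type*) [Group G] [Group H] (X Y : Type*)
    [MulAction (G × H) X] [MulAction (G × H) Y] : Prop :=
  IsoAsGSets (G × G)
    (BisetTensor G H G X (BisetOp H G X) ⊕ BisetTensor G H G Y (BisetOp H G Y))
    (BisetGrp G ⊕ (BisetTensor G H G X (BisetOp H G Y) ⊕ BisetTensor G H G Y (BisetOp H G X)))

section Iota

/-- For a `G`-set `Z`, the `(G,G)`-biset `ι(Z) = G × Z` with action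
`(g₁,g₂) • (g,z) = (g₁ g g₂⁻¹, g₂ • z)`. -/
structure IotaBiset (G Z : Type*) where
  /-- the group component -/
  fst : G
  /-- the `G`-set component -/
  snd : Z

instance IotaBiset.instSMul {G Z : Type*} [Group G] [MulAction G Z] :
    SMul (G × G) (IotaBiset G Z) :=
  ⟨fun p x => ⟨p.1 * x.fst * p.2⁻¹, p.2 • x.snd⟩⟩

theorem IotaBiset.smul_def {G Z : Type*} [Group G] [MulAction G Z] (p : G × G)
    (x : IotaBiset G Z) : p • x = ⟨p.1 * x.fst * p.2⁻¹, p.2 • x.snd⟩ := rfl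

instance IotaBiset.instMulAction {G Z : Type*} [Group G] [MulAction G Z] :
    MulAction (G × G) (IotaBiset G Z) where
  one_smul x := by
    cases x
    simp [IotaBiset.smul_def]
  mul_smul p q x := by
    cases x
    simp [IotaBiset.smul_def, mul_assoc, mul_smul]

instance IotaBiset.instFinite {G Z : Type*} [Finite G] [Finite Z] : Finite (IotaBiset G Z) :=
  Finite.of_equiv (G × Z) ⟨fun p => ⟨p.1, p.2⟩, fun x => (x.fst, x.snd), fun _ => rfl,
    fun _ => rfl⟩

end Iota

/-- An orthogonal pair of finite bifree `(G,H)`-bisets, encoding an element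
`γ = [X] - [Y]` of `B^Δ(G,H)` with `γ ·_H γ° = [G]`. -/
structure OrthPair (G H : Type) [Group G] [Group H] : Type 1 where
  /-- the first biset -/
  X : Type
  /-- the second biset -/
  Y : Type
  [actX : MulAction (G × H) X]
  [actY : MulAction (G × H) Y]
  [finX : Finite X]
  [finY : Finite Y]
  bifreeX : IsBifree G H X
  bifreeY : IsBifree G H Y
  orth : IsOrthogonalPair G H X Y

attribute [instance] OrthPair.actX OrthPair.actY OrthPair.finX OrthPair.finY

/-! A subgroup `L ≤ G × H` with a fixed point on a right-free biset is the graph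
`{(r, ψ r) | r ∈ R}` of a homomorphism `ψ : R →* H` with `R ≤ G`. Counting the pairs `(x, y)`
whose class in `X ×_H Y°` is fixed by `Δ(R)` in two ways gives
`|(X ×_H Y°)^Δ(R)| · |H| = ∑ ψ, |X^Γψ| · |Y^Γψ|`. Taking `Δ(R)`-fixed points in the isomorphism
defining an orthogonal pair then yields `∑ ψ, (|X^Γψ| - |Y^Γψ|)² = |G^Δ(R)| · |H| ≤ |G| · |H|`,
so every mark of `[X] - [Y]` lies in `[-|G||H|, |G||H|]`, and `G × H` has finitely many
subgroups. -/

def IsRightFree (G H X : Type*) [Group G] [Group H] [MulAction (G × H) X] : Prop :=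
  ∀ (h : H) (x : X), ((1 : G), h) • x = x → h = 1

theorem IsBifree.isRightFree {G H X : Type*} [Group G] [Group H] [MulAction (G × H) X]
    (hX : IsBifree G H X) : IsRightFree G H X :=
  hX.2

theorem Nat.card_preimage_eq_card_mul {α β : Type*} [Finite α] [Finite β] (f : α → β)
    (s : Set β) {n : ℕ} (hf : ∀ b ∈ s, Nat.card (f ⁻¹' {b}) = n) :
    Nat.card (f ⁻¹' s) = Nat.card s * n := by
  have := Fintype.ofFinite s
  let e : (Σ b : s, f ⁻¹' {(b : β)}) ≃ f ⁻¹' s :=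
    { toFun := fun ⟨b, a, ha⟩ =>
        ⟨a, by rw [Set.mem_preimage, Set.mem_singleton_iff.1 ha]; exact b.2⟩
      invFun := fun a => ⟨⟨f a, a.2⟩, a, rfl⟩
      left_inv := by
        rintro ⟨⟨b, hb⟩, a, ha⟩
        obtain rfl : f a = b := ha
        rfl
      right_inv := fun _ => rfl }
  rw [← Nat.card_congr e, Nat.card_sigma, Finset.sum_congr rfl fun (b : s) _ => hf b b.2,
    Finset.sum_const, smul_eq_mul, Finset.card_univ, Nat.card_eq_fintype_card]

section Graph

variable {G H : Type*} [Group G] [Group H]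

def graphOn (R : Subgroup G) (ψ : R →* H) : Subgroup (G × H) :=
  (R.subtype.prod ψ).range

theorem mem_fixedPoints_diagSubgroup_iff {Z : Type*} [MulAction (G × G) Z] {R : Subgroup G}
    {z : Z} : z ∈ fixedPoints (diagSubgroup R) Z ↔ ∀ r : R, ((r : G), (r : G)) • z = z :=
  ⟨fun hz r => hz ⟨_, r, rfl⟩, by rintro hz ⟨_, r, rfl⟩; exact hz r⟩

variable {X : Type*} [MulAction (G × H) X]

theorem mem_fixedPoints_graphOn_iff {R : Subgroup G} {ψ : R →* H} {x : X} :
    x ∈ fixedPoints (graphOn R ψ) X ↔ ∀ r : R, ((r : G), ψ r) • x = x :=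
  ⟨fun hx r => hx ⟨_, r, rfl⟩, by rintro hx ⟨_, r, rfl⟩; exact hx r⟩

namespace IsRightFree

theorem injective_smul (hX : IsRightFree G H X) (x : X) :
    Function.Injective fun h : H => ((1 : G), h) • x := by
  intro h h' e
  have : ((1 : G), h'⁻¹ * h) • x = x := by
    rw [show ((1 : G), h'⁻¹ * h) = ((1 : G), h')⁻¹ * (1, h) by simp, mul_smul, inv_smul_eq_iff]
    exact e
  exact (inv_mul_eq_one.1 (hX _ _ this)).symm

theorem eq_of_smul_eq_self (hX : IsRightFree G H X) {g : G} {h h' : H} {x : X}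
    (h₁ : (g, h) • x = x) (h₂ : (g, h') • x = x) : h = h' := by
  have split : ∀ k : H, (g, k) • x = ((g, 1) : G × H) • ((1 : G), k) • x := fun k => by
    rw [smul_smul, Prod.mk_mul_mk, mul_one, one_mul]
  refine hX.injective_smul x (MulAction.injective ((g, 1) : G × H) ?_)
  simp only [← split, h₁, h₂]

theorem exists_monoidHom_smul_eq_self (hX : IsRightFree G H X) {R : Subgroup G} {x : X}
    (hx : ∀ r : R, ∃ h : H, ((r : G), h) • x = x) :
    ∃ ψ : R →* H, ∀ r : R, ((r : G), ψ r) • x = x := by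
  choose f hf using hx
  refine ⟨MonoidHom.mk' f fun r s => hX.eq_of_smul_eq_self (hf (r * s)) ?_, hf⟩
  change (((r : G), f r) * ((s : G), f s)) • x = x
  rw [mul_smul, hf s, hf r]

theorem eq_of_mem_fixedPoints_graphOn (hX : IsRightFree G H X) {R : Subgroup G}
    {ψ ψ' : R →* H} {x : X} (hψ : x ∈ fixedPoints (graphOn R ψ) X)
    (hψ' : x ∈ fixedPoints (graphOn R ψ') X) :
    ψ = ψ' :=
  MonoidHom.ext fun r => hX.eq_of_smul_eq_self (mem_fixedPoints_graphOn_iff.1 hψ r)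
    (mem_fixedPoints_graphOn_iff.1 hψ' r)

theorem exists_eq_graphOn (hX : IsRightFree G H X) {L : Subgroup (G × H)} {x : X}
    (hx : x ∈ fixedPoints L X) :
    ∃ (R : Subgroup G) (ψ : R →* H), L = graphOn R ψ := by
  have hfix : ∀ a ∈ L, a • x = x := fun a ha => hx ⟨a, ha⟩
  obtain ⟨ψ, hψ⟩ := hX.exists_monoidHom_smul_eq_self (R := L.map (MonoidHom.fst G H)) (x := x)
    (by rintro ⟨_, a, ha, rfl⟩; exact ⟨a.2, hfix a ha⟩)
  refine ⟨_, ψ, le_antisymm ?_ ?_⟩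
  · intro a ha
    exact ⟨⟨a.1, a, ha, rfl⟩, Prod.ext rfl (hX.eq_of_smul_eq_self (hψ _) (hfix a ha))⟩
  · rintro _ ⟨⟨_, a, ha, rfl⟩, rfl⟩
    change (a.1, ψ ⟨a.1, a, ha, rfl⟩) ∈ L
    rwa [hX.eq_of_smul_eq_self (hψ _) (hfix a ha)]

end IsRightFree

end Graph

section Tensor

variable {G H K : Type*} [Group G] [Group H] [Group K]
variable {X Y : Type*} [MulAction (G × H) X] [MulAction (H × K) Y]

instance BisetTensor.instFinite [Finite X] [Finite Y] : Finite (BisetTensor G H K X Y) :=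
  Quotient.finite _

theorem BisetTensor.mk_eq_mk_iff {p q : X × Y} :
    (BisetTensor.mk p : BisetTensor G H K X Y) = BisetTensor.mk q ↔
      ∃ h : H, q.1 = ((1 : G), h) • p.1 ∧ q.2 = (h, (1 : K)) • p.2 :=
  Quotient.eq

theorem BisetTensor.card_fiber_mk (hX : IsRightFree G H X) (b : BisetTensor G H K X Y) :
    Nat.card ((BisetTensor.mk : X × Y → BisetTensor G H K X Y) ⁻¹' {b}) = Nat.card H := by
  obtain ⟨p, rfl⟩ : ∃ p, BisetTensor.mk p = b := Quotient.mk_surjective b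
  have hfiber : (BisetTensor.mk : X × Y → BisetTensor G H K X Y) ⁻¹' {BisetTensor.mk p} =
      Set.range fun h : H => (((1 : G), h) • p.1, (h, (1 : K)) • p.2) := by
    ext q
    simp only [Set.mem_preimage, Set.mem_singleton_iff, Set.mem_range, Prod.ext_iff]
    rw [eq_comm, BisetTensor.mk_eq_mk_iff]
    simp only [eq_comm]
  rw [hfiber, Nat.card_range_of_injective]
  exact fun h h' e => hX.injective_smul p.1 (congrArg Prod.fst e)

theorem BisetTensor.card_preimage_mk [Finite X] [Finite Y] (hX : IsRightFree G H X)
    (s : Set (BisetTensor G H K X Y)) :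
    Nat.card ((BisetTensor.mk : X × Y → BisetTensor G H K X Y) ⁻¹' s) =
      Nat.card s * Nat.card H :=
  Nat.card_preimage_eq_card_mul _ s fun b _ => BisetTensor.card_fiber_mk hX b

end Tensor

section Diagonal

variable {G H : Type*} [Group G] [Group H]
variable {X Y : Type*} [MulAction (G × H) X] [MulAction (G × H) Y]

theorem BisetTensor.mk_mem_fixedPoints_diagSubgroup_iff {R : Subgroup G} {x : X} {y : Y} :
    (BisetTensor.mk (x, y) : BisetTensor G H G X (BisetOp H G Y)) ∈
        fixedPoints (diagSubgroup R) (BisetTensor G H G X (BisetOp H G Y)) ↔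
      ∀ r : R, ∃ h : H, ((r : G), h) • x = x ∧ ((r : G), h) • y = y := by
  refine mem_fixedPoints_diagSubgroup_iff.trans (forall_congr' fun r => ?_)
  rw [BisetTensor.smul_mk, BisetTensor.mk_eq_mk_iff]
  refine exists_congr fun h => and_congr ?_ ?_
  · change x = ((1 : G), h) • ((r : G), (1 : H)) • x ↔ _
    rw [smul_smul, Prod.mk_mul_mk, one_mul, mul_one, eq_comm]
  · -- `(a, b) ∈ H × G` acts on `Y°` as `(b, a) ∈ G × H` acts on `Y`
    change y = ((1 : G), h) • ((r : G), (1 : H)) • y ↔ _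
    rw [smul_smul, Prod.mk_mul_mk, one_mul, mul_one, eq_comm]

theorem BisetTensor.mk_mem_fixedPoints_diagSubgroup_iff_exists_graphOn
    (hX : IsRightFree G H X) {R : Subgroup G} {x : X} {y : Y} :
    (BisetTensor.mk (x, y) : BisetTensor G H G X (BisetOp H G Y)) ∈
        fixedPoints (diagSubgroup R) (BisetTensor G H G X (BisetOp H G Y)) ↔
      ∃ ψ : R →* H, x ∈ fixedPoints (graphOn R ψ) X ∧ y ∈ fixedPoints (graphOn R ψ) Y := by
  simp only [BisetTensor.mk_mem_fixedPoints_diagSubgroup_iff, mem_fixedPoints_graphOn_iff]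
  constructor
  · intro hxy
    obtain ⟨ψ, hψ⟩ := hX.exists_monoidHom_smul_eq_self fun r => (hxy r).imp fun _ => And.left
    refine ⟨ψ, hψ, fun r => ?_⟩
    obtain ⟨h, hx, hy⟩ := hxy r
    rwa [hX.eq_of_smul_eq_self (hψ r) hx]
  · rintro ⟨ψ, hx, hy⟩ r
    exact ⟨ψ r, hx r, hy r⟩

theorem card_fixedPoints_diagSubgroup_tensor_mul_card [Finite X] [Finite Y]
    (hX : IsRightFree G H X) (R : Subgroup G) [Fintype (R →* H)] :
    Nat.card (fixedPoints (diagSubgroup R) (BisetTensor G H G X (BisetOp H G Y))) * Nat.card H =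
      ∑ ψ : R →* H,
        Nat.card (fixedPoints (graphOn R ψ) X) * Nat.card (fixedPoints (graphOn R ψ) Y) := by
  let e : (Σ ψ : R →* H, fixedPoints (graphOn R ψ) X × fixedPoints (graphOn R ψ) Y) →
      (BisetTensor.mk : X × BisetOp H G Y → BisetTensor G H G X (BisetOp H G Y)) ⁻¹'
        fixedPoints (diagSubgroup R) _ := fun ⟨ψ, x, y⟩ =>
    ⟨(x, y.1), (BisetTensor.mk_mem_fixedPoints_diagSubgroup_iff_exists_graphOn hX).2
      ⟨ψ, x.2, y.2⟩⟩
  have he : Function.Bijective e := by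
    constructor
    · rintro ⟨ψ, ⟨x, hx⟩, ⟨y, hy⟩⟩ ⟨ψ', ⟨x', hx'⟩, ⟨y', hy'⟩⟩ hxy
      obtain ⟨rfl, rfl⟩ := Prod.mk.inj (congrArg Subtype.val hxy)
      obtain rfl := hX.eq_of_mem_fixedPoints_graphOn hx hx'
      rfl
    · rintro ⟨⟨x, y⟩, hxy⟩
      obtain ⟨ψ, hx, hy⟩ :=
        (BisetTensor.mk_mem_fixedPoints_diagSubgroup_iff_exists_graphOn (Y := Y) hX).1 hxy
      exact ⟨⟨ψ, ⟨x, hx⟩, ⟨y, hy⟩⟩, rfl⟩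
  rw [← BisetTensor.card_preimage_mk hX, ← Nat.card_congr (Equiv.ofBijective e he),
    Nat.card_sigma]
  simp_rw [Nat.card_prod]

end Diagonal

section FixedPoints

variable {M A B : Type*} [Group M] [MulAction M A] [MulAction M B]

theorem IsoAsGSets.card_fixedPoints_eq (hAB : IsoAsGSets M A B) (S : Subgroup M) :
    Nat.card (fixedPoints S A) = Nat.card (fixedPoints S B) := by
  obtain ⟨e, he⟩ := hAB
  refine Nat.card_congr (e.subtypeEquiv fun a => forall_congr' fun m => ?_)
  rw [Subgroup.smul_def, Subgroup.smul_def, ← he, e.apply_eq_iff_eq]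

theorem card_fixedPoints_sum [Finite A] [Finite B] (S : Subgroup M) :
    Nat.card (fixedPoints S (A ⊕ B)) =
      Nat.card (fixedPoints S A) + Nat.card (fixedPoints S B) := by
  rw [← Nat.card_sum]
  refine Nat.card_congr (Equiv.subtypeSum.trans (Equiv.sumCongr
    (Equiv.subtypeEquivRight fun a => ?_) (Equiv.subtypeEquivRight fun b => ?_))) <;>
  simp [mem_fixedPoints, Subgroup.smul_def]

end FixedPoints

theorem IsOrthogonalPair.card_fixedPoints {G H X Y : Type*} [Group G] [Group H]
    [MulAction (G × H) X] [MulAction (G × H) Y] [Finite G] [Finite X] [Finite Y]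
    (horth : IsOrthogonalPair G H X Y) (S : Subgroup (G × G)) :
    Nat.card (fixedPoints S (BisetTensor G H G X (BisetOp H G X))) +
        Nat.card (fixedPoints S (BisetTensor G H G Y (BisetOp H G Y))) =
      Nat.card (fixedPoints S (BisetGrp G)) +
        (Nat.card (fixedPoints S (BisetTensor G H G X (BisetOp H G Y))) +
          Nat.card (fixedPoints S (BisetTensor G H G Y (BisetOp H G X)))) := by
  have h := IsoAsGSets.card_fixedPoints_eq horth S
  rwa [card_fixedPoints_sum, card_fixedPoints_sum, card_fixedPoints_sum] at h

namespace OrthPair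

variable {G H : Type} [Group G] [Group H]

noncomputable def mark (p : OrthPair G H) (L : Subgroup (G × H)) : ℤ :=
  Nat.card (fixedPoints L p.X) - Nat.card (fixedPoints L p.Y)

theorem sum_mark_graphOn_sq [Finite G] (p : OrthPair G H) (R : Subgroup G) [Fintype (R →* H)] :
    ∑ ψ : R →* H, p.mark (graphOn R ψ) ^ 2 =
      Nat.card (fixedPoints (diagSubgroup R) (BisetGrp G)) * Nat.card H := by
  have hXX := card_fixedPoints_diagSubgroup_tensor_mul_card (Y := p.X) p.bifreeX.isRightFree R
  have hXY := card_fixedPoints_diagSubgroup_tensor_mul_card (Y := p.Y) p.bifreeX.isRightFree R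
  have hYX := card_fixedPoints_diagSubgroup_tensor_mul_card (Y := p.X) p.bifreeY.isRightFree R
  have hYY := card_fixedPoints_diagSubgroup_tensor_mul_card (Y := p.Y) p.bifreeY.isRightFree R
  have horth := p.orth.card_fixedPoints (diagSubgroup R)
  zify at hXX hXY hYX hYY horth
  have expand : ∀ a b : (R →* H) → ℤ, ∑ ψ, (a ψ - b ψ) ^ 2 =
      ∑ ψ, a ψ * a ψ + ∑ ψ, b ψ * b ψ - ∑ ψ, a ψ * b ψ - ∑ ψ, b ψ * a ψ := fun a b => by
    simp only [← Finset.sum_add_distrib, ← Finset.sum_sub_distrib]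
    exact Finset.sum_congr rfl fun _ _ => by ring
  simp only [mark]
  rw [expand, ← hXX, ← hYY, ← hXY, ← hYX]
  linear_combination (Nat.card H : ℤ) * horth

theorem abs_mark_le [Finite G] [Finite H] (p : OrthPair G H) (L : Subgroup (G × H)) :
    |p.mark L| ≤ Nat.card G * Nat.card H := by
  by_cases hL : ∃ (R : Subgroup G) (ψ : R →* H), L = graphOn R ψ
  · obtain ⟨R, ψ₀, rfl⟩ := hL
    have : Finite (R →* H) := Finite.of_injective _ DFunLike.coe_injective
    have := Fintype.ofFinite (R →* H)
    have card_grp : Nat.card (fixedPoints (diagSubgroup R) (BisetGrp G)) ≤ Nat.card G :=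
      (Finite.card_subtype_le _).trans_eq
        (Nat.card_congr ⟨BisetGrp.val, BisetGrp.mk, fun _ => rfl, fun _ => rfl⟩)
    calc |p.mark (graphOn R ψ₀)|
        ≤ p.mark (graphOn R ψ₀) ^ 2 := Int.abs_eq_natAbs _ ▸ Int.natAbs_le_self_sq _
      _ ≤ ∑ ψ, p.mark (graphOn R ψ) ^ 2 :=
        Finset.single_le_sum (f := fun ψ => p.mark (graphOn R ψ) ^ 2) (fun _ _ => sq_nonneg _)
          (Finset.mem_univ ψ₀)
      _ = Nat.card (fixedPoints (diagSubgroup R) (BisetGrp G)) * Nat.card H :=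
        p.sum_mark_graphOn_sq R
      _ ≤ Nat.card G * Nat.card H := by gcongr
  · have : IsEmpty (fixedPoints L p.X) :=
      ⟨fun x => hL (p.bifreeX.isRightFree.exists_eq_graphOn x.2)⟩
    have : IsEmpty (fixedPoints L p.Y) :=
      ⟨fun y => hL (p.bifreeY.isRightFree.exists_eq_graphOn y.2)⟩
    simp [mark]

end OrthPair

/-- the set of mark functions `L ↦ |X^L| - |Y^L|` of orthogonal pairs `(X,Y)` of
finite bifree `(G,H)`-bisets is finite (i.e. `B°^Δ(G,H)` is finite). -/
theorem statement9 (G H : Type) [Group G] [Group H] [Finite G] [Finite H] :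
    {f : Subgroup (G × H) → ℤ | ∃ p : OrthPair G H,
      ∀ L : Subgroup (G × H),
        f L = (Nat.card (MulAction.fixedPoints L p.X) : ℤ) -
          (Nat.card (MulAction.fixedPoints L p.Y) : ℤ)}.Finite := by
  refine (Set.Finite.pi fun _ : Subgroup (G × H) =>
    Set.finite_Icc (-(Nat.card G * Nat.card H : ℤ)) (Nat.card G * Nat.card H)).subset ?_
  rintro f ⟨p, hp⟩
  rw [Set.mem_univ_pi]
  intro L
  rw [hp L]
  exact abs_le.1 (p.abs_mark_le L)
end

section
/- Let G be a finite group and H ≤ G a subgroup with H ≠ {1}, H ≠ G, and H ∩ gHg⁻¹ = {1} for every g ∈ G∖H (for instance, H a Frobenius complement in a Frobenius group G). Let k := |H\G/H| − 1 be one less than the number of (H,H)-double cosets in G. Then for all automorphisms α, β of H there is an isomorphism of (G,G)-bisets ((G×G)/Δ(H,α,H)) ×_G ((G×G)/Δ(H,β,H)) ≅ ((G×G)/Δ(H,αβ,H)) ⊔ (k copies of (G×G)/Δ({1},id,{1})), where (G×G)/Δ({1},id,{1}) is just G×G with the left translation (G×G)-action. -/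
open MulAction

/-!
Every element of `X ×_G Y`, for `X = (G×G)/Δ(H,α,H)` and `Y = (G×G)/Δ(H,β,H)`, can be written
as `[(a,1), (x,c)]`, and `[(a,1), (x,c)] = [(a',1), (x',c')]` iff
`(a', x', c') = (a·α(q), q⁻¹·x·β(s), c·s)` for some `q, s ∈ H`. So the `(G,G)`-orbits are indexed
by the double cosets `HxH`. The orbit of `x = 1` is `(G×G)/Δ(H,αβ,H)`; for `x ∉ H` the stabiliser
of `[(a,1),(x,c)]` is controlled by `H ∩ xHx⁻¹ = 1`, so that orbit is free.
-/

theorem isoAsGSets_of_bijective {M X Y : Type*} [SMul M X] [SMul M Y] {f : Y → X}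
    (hf : Function.Bijective f) (hsmul : ∀ (m : M) (y : Y), f (m • y) = m • f y) :
    IsoAsGSets M X Y := by
  refine ⟨(Equiv.ofBijective f hf).symm, fun m x => hf.1 ?_⟩
  simp only [hsmul, Equiv.ofBijective_apply_symm_apply]

theorem twistedDiagonal.mk_eq_mk_iff {G K : Type*} [Group G] [Group K] {P : Subgroup G}
    {Q : Subgroup K} {α : Q ≃* P} {a a' : G} {b b' : K} :
    (QuotientGroup.mk (a, b) : (G × K) ⧸ twistedDiagonal P Q α) = QuotientGroup.mk (a', b') ↔
      ∃ q : Q, a' = a * α q ∧ b' = b * q := by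
  rw [QuotientGroup.eq]
  constructor
  · rintro ⟨q, hq⟩
    simp only [Prod.ext_iff] at hq
    exact ⟨q, eq_mul_of_inv_mul_eq hq.1.symm, eq_mul_of_inv_mul_eq hq.2.symm⟩
  · rintro ⟨q, rfl, rfl⟩
    exact ⟨q, by simp⟩

section TwistedTensor

variable {G H K : Type*} [Group G] [Group H] [Group K]
  {P : Subgroup G} {Q Q' : Subgroup H} {S : Subgroup K}

abbrev TwistedTensor (α : Q ≃* P) (β : S ≃* Q') :=
  BisetTensor G H K ((G × H) ⧸ twistedDiagonal P Q α) ((H × K) ⧸ twistedDiagonal Q' S β)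

variable {α : Q ≃* P} {β : S ≃* Q'}

variable (α β) in
def twistedTensorMk (a : G) (x : H) (c : K) : TwistedTensor α β :=
  BisetTensor.mk (QuotientGroup.mk (a, 1), QuotientGroup.mk (x, c))

theorem smul_twistedTensorMk (m : G × K) (a : G) (x : H) (c : K) :
    m • twistedTensorMk α β a x c = twistedTensorMk α β (m.1 * a) x (m.2 * c) := by
  simp only [twistedTensorMk, BisetTensor.smul_mk, Quotient.smul_mk, smul_eq_mul, Prod.mk_mul_mk,
    mul_one, one_mul]

theorem exists_twistedTensorMk_eq (t : TwistedTensor α β) :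
    ∃ a x c, twistedTensorMk α β a x c = t := by
  induction t using Quotient.inductionOn with | h p => ?_
  obtain ⟨u, v⟩ := p
  induction u using QuotientGroup.induction_on with | H u => ?_
  induction v using QuotientGroup.induction_on with | H v => ?_
  refine ⟨u.1, u.2⁻¹ * v.1, v.2, Quotient.sound ⟨u.2, ?_, ?_⟩⟩
  · show _ = QuotientGroup.mk ((1, u.2) * (u.1, 1))
    simp
  · show _ = QuotientGroup.mk ((u.2, 1) * (u.2⁻¹ * v.1, v.2))
    simp

theorem twistedTensorMk_eq_iff {a a' : G} {x x' : H} {c c' : K} :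
    twistedTensorMk α β a x c = twistedTensorMk α β a' x' c' ↔
      ∃ q : Q, ∃ s : S, a' = a * α q ∧ x' = (q : H)⁻¹ * x * β s ∧ c' = c * s := by
  constructor
  · intro h
    obtain ⟨y, h1, h2⟩ := Quotient.exact h
    change QuotientGroup.mk (a', 1) = QuotientGroup.mk ((1, y) * (a, 1)) at h1
    change QuotientGroup.mk (x', c') = QuotientGroup.mk ((y, 1) * (x, c)) at h2
    simp only [Prod.mk_mul_mk, one_mul, mul_one] at h1 h2
    obtain ⟨q, rfl, hy⟩ := twistedDiagonal.mk_eq_mk_iff.mp h1.symm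
    obtain rfl : y = (q : H)⁻¹ := eq_inv_of_mul_eq_one_left hy.symm
    obtain ⟨s, rfl, rfl⟩ := twistedDiagonal.mk_eq_mk_iff.mp h2.symm
    exact ⟨q, s, rfl, rfl, rfl⟩
  · rintro ⟨q, s, rfl, rfl, rfl⟩
    refine Quotient.sound ⟨(q : H)⁻¹, ?_, ?_⟩
    · show QuotientGroup.mk (a * α q, 1) = QuotientGroup.mk ((1, (q : H)⁻¹) * (a, 1))
      rw [Prod.mk_mul_mk, one_mul, mul_one]
      exact (twistedDiagonal.mk_eq_mk_iff.mpr ⟨q, rfl, (inv_mul_cancel _).symm⟩).symm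
    · show QuotientGroup.mk (_, c * s) = QuotientGroup.mk (((q : H)⁻¹, 1) * (x, c))
      rw [Prod.mk_mul_mk, one_mul]
      exact (twistedDiagonal.mk_eq_mk_iff.mpr ⟨s, rfl, rfl⟩).symm

theorem exists_twistedTensorMk_eq_of_doubleCoset_eq {x x' : H}
    (h : DoubleCoset.mk Q Q' x = DoubleCoset.mk Q Q' x') (a : G) (c : K) :
    ∃ a' c', twistedTensorMk α β a' x' c' = twistedTensorMk α β a x c := by
  obtain ⟨q, hq, q', hq', rfl⟩ := (DoubleCoset.eq Q Q' x x').mp h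
  refine ⟨_, _, (twistedTensorMk_eq_iff.mpr
    ⟨⟨q⁻¹, Q.inv_mem hq⟩, β.symm ⟨q', hq'⟩, rfl, ?_, rfl⟩).symm⟩
  simp

theorem doubleCoset_eq_of_twistedTensorMk_eq {a a' : G} {x x' : H} {c c' : K}
    (h : twistedTensorMk α β a x c = twistedTensorMk α β a' x' c') :
    DoubleCoset.mk Q Q' x = DoubleCoset.mk Q Q' x' := by
  obtain ⟨q, s, -, rfl, -⟩ := twistedTensorMk_eq_iff.mp h
  exact (DoubleCoset.eq Q Q' _ _).mpr ⟨_, Q.inv_mem q.2, _, (β s).2, rfl⟩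

variable (α β) in
def twistedTensorFree (x : H) : (G × K) ⧸ (⊥ : Subgroup (G × K)) → TwistedTensor α β :=
  Quotient.lift (fun p => twistedTensorMk α β p.1 x p.2) fun p p' h => by
    have h := Quotient.sound h
    rw [QuotientGroup.eq, Subgroup.mem_bot, inv_mul_eq_one] at h
    rw [h]

theorem twistedTensorFree_smul (x : H) (m : G × K) (p : (G × K) ⧸ (⊥ : Subgroup (G × K))) :
    twistedTensorFree α β x (m • p) = m • twistedTensorFree α β x p := by
  induction p using QuotientGroup.induction_on with | H p => ?_
  exact (smul_twistedTensorMk m p.1 x p.2).symm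

theorem twistedTensorFree_injective {x : H} (hx : Q ⊓ Q'.map (MulAut.conj x).toMonoidHom = ⊥) :
    Function.Injective (twistedTensorFree α β x) := by
  intro p p' h
  induction p using QuotientGroup.induction_on with | H p => ?_
  induction p' using QuotientGroup.induction_on with | H p' => ?_
  obtain ⟨q, s, h1, h2, h3⟩ := twistedTensorMk_eq_iff.mp h
  have hcomm : (q : H) * x = x * β s := by
    nth_rw 1 [h2]
    group
  have hq : (q : H) ∈ Q ⊓ Q'.map (MulAut.conj x).toMonoidHom := by
    refine ⟨q.2, β s, (β s).2, ?_⟩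
    rw [MulEquiv.coe_toMonoidHom, MulAut.conj_apply, ← hcomm, mul_inv_cancel_right]
  rw [hx, Subgroup.mem_bot, OneMemClass.coe_eq_one] at hq
  subst hq
  obtain rfl : s = 1 := by simpa using hcomm
  exact congrArg _ (Prod.ext (by simpa using h1.symm) (by simpa using h3.symm))

end TwistedTensor

section TwistedTensorComp

variable {G H K : Type*} [Group G] [Group H] [Group K]
  {P : Subgroup G} {Q : Subgroup H} {S : Subgroup K} {α : Q ≃* P} {β : S ≃* Q}

variable (α β) in
def twistedTensorOfComp : (G × K) ⧸ twistedDiagonal P S (β.trans α) → TwistedTensor α β :=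
  Quotient.lift (fun p => twistedTensorMk α β p.1 1 p.2) fun ⟨a, c⟩ ⟨a', c'⟩ h => by
    obtain ⟨s, rfl, rfl⟩ := twistedDiagonal.mk_eq_mk_iff.mp (Quotient.sound h)
    exact twistedTensorMk_eq_iff.mpr ⟨β s, s, rfl, by simp, rfl⟩

theorem twistedTensorOfComp_smul (m : G × K) (p : (G × K) ⧸ twistedDiagonal P S (β.trans α)) :
    twistedTensorOfComp α β (m • p) = m • twistedTensorOfComp α β p := by
  induction p using QuotientGroup.induction_on with | H p => ?_
  exact (smul_twistedTensorMk m p.1 1 p.2).symm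

theorem twistedTensorOfComp_injective : Function.Injective (twistedTensorOfComp α β) := by
  intro p p' h
  induction p using QuotientGroup.induction_on with | H p => ?_
  induction p' using QuotientGroup.induction_on with | H p' => ?_
  obtain ⟨q, s, h1, h2, h3⟩ := twistedTensorMk_eq_iff.mp h
  obtain rfl : q = β s := by
    rw [mul_one, eq_comm, inv_mul_eq_one] at h2
    exact Subtype.ext h2
  exact twistedDiagonal.mk_eq_mk_iff.mpr ⟨s, h1, h3⟩

end TwistedTensorComp

theorem DoubleCoset.mk_eq_mk_one_iff {G : Type*} [Group G] {H : Subgroup G} {x : G} :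
    DoubleCoset.mk H H x = DoubleCoset.mk H H 1 ↔ x ∈ H := by
  rw [DoubleCoset.eq]
  constructor
  · rintro ⟨h, hh, l, hl, hx⟩
    rw [show x = h⁻¹ * (h * x * l) * l⁻¹ by group, ← hx, mul_one]
    exact H.mul_mem (H.inv_mem hh) (H.inv_mem hl)
  · intro hx
    exact ⟨x⁻¹, H.inv_mem hx, 1, H.one_mem, by group⟩

theorem exists_nontrivial_doubleCoset_transversal {G : Type*} [Group G] (H : Subgroup G)
    [Finite (DoubleCoset.Quotient (H : Set G) H)] :
    ∃ r : Fin (Nat.card (DoubleCoset.Quotient (H : Set G) H) - 1) → G,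
      (∀ i, r i ∉ H) ∧ Function.Injective (DoubleCoset.mk H H ∘ r) ∧
        ∀ x ∉ H, ∃ i, DoubleCoset.mk H H (r i) = DoubleCoset.mk H H x := by
  classical
  have hcard : Nat.card {q : DoubleCoset.Quotient (H : Set G) H // q ≠ DoubleCoset.mk H H 1} =
      Nat.card (DoubleCoset.Quotient (H : Set G) H) - 1 := by
    have := Nat.card_congr (Equiv.optionSubtypeNe (DoubleCoset.mk H H 1))
    rw [Finite.card_option] at this
    omega
  let e := (Finite.equivFinOfCardEq hcard).symm
  refine ⟨fun i => (e i).1.out, fun i hi => ?_, fun i j h => ?_, fun x hx => ?_⟩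
  · apply (e i).2
    rw [← DoubleCoset.out_eq' H H (e i).1]
    exact DoubleCoset.mk_eq_mk_one_iff.mpr hi
  · simp only [Function.comp_apply, DoubleCoset.out_eq'] at h
    exact e.injective (Subtype.ext h)
  · refine ⟨e.symm ⟨DoubleCoset.mk H H x, fun h => hx (DoubleCoset.mk_eq_mk_one_iff.mp h)⟩, ?_⟩
    simp only [Equiv.apply_symm_apply, DoubleCoset.out_eq']

section Malnormal

variable {G : Type*} [Group G] {H : Subgroup G} {α β : H ≃* H} {ι : Type*} (r : ι → G)

variable (α β) in
def twistedTensorOfSum :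
    ((G × G) ⧸ twistedDiagonal H H (β.trans α)) ⊕ (Σ _ : ι, (G × G) ⧸ (⊥ : Subgroup (G × G))) →
      TwistedTensor α β :=
  Sum.elim (twistedTensorOfComp α β) fun p => twistedTensorFree α β (r p.1) p.2

theorem twistedTensorOfSum_smul (m : G × G) (y) :
    twistedTensorOfSum α β r (m • y) = m • twistedTensorOfSum α β r y := by
  rcases y with p | ⟨i, p⟩
  · exact twistedTensorOfComp_smul m p
  · exact twistedTensorFree_smul (r i) m p

theorem twistedTensorOfSum_injective
    (hmal : ∀ g : G, g ∉ H → H ⊓ Subgroup.map (MulAut.conj g).toMonoidHom H = ⊥)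
    (hr : ∀ i, r i ∉ H) (hinj : Function.Injective (DoubleCoset.mk H H ∘ r)) :
    Function.Injective (twistedTensorOfSum α β r) := by
  refine twistedTensorOfComp_injective.sumElim ?_ ?_
  · rintro ⟨i, p⟩ ⟨j, p'⟩ h
    obtain rfl : i = j := by
      induction p using QuotientGroup.induction_on with | H p => ?_
      induction p' using QuotientGroup.induction_on with | H p' => ?_
      exact hinj (doubleCoset_eq_of_twistedTensorMk_eq h)
    exact congrArg (Sigma.mk i) (twistedTensorFree_injective (hmal _ (hr i)) h)
  · rintro p ⟨i, p'⟩ h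
    induction p using QuotientGroup.induction_on with | H p => ?_
    induction p' using QuotientGroup.induction_on with | H p' => ?_
    exact hr i (DoubleCoset.mk_eq_mk_one_iff.mp (doubleCoset_eq_of_twistedTensorMk_eq h).symm)

theorem twistedTensorOfSum_surjective
    (hsurj : ∀ x ∉ H, ∃ i, DoubleCoset.mk H H (r i) = DoubleCoset.mk H H x) :
    Function.Surjective (twistedTensorOfSum α β r) := by
  intro t
  obtain ⟨a, x, c, rfl⟩ := exists_twistedTensorMk_eq t
  by_cases hx : x ∈ H
  · obtain ⟨a', c', h⟩ := exists_twistedTensorMk_eq_of_doubleCoset_eq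
      (DoubleCoset.mk_eq_mk_one_iff.mpr hx) a c
    exact ⟨Sum.inl (QuotientGroup.mk (a', c')), h⟩
  · obtain ⟨i, hi⟩ := hsurj x hx
    obtain ⟨a', c', h⟩ := exists_twistedTensorMk_eq_of_doubleCoset_eq hi.symm a c
    exact ⟨Sum.inr ⟨i, QuotientGroup.mk (a', c')⟩, h⟩

end Malnormal

theorem isoAsGSets_twistedTensor_of_malnormal {G : Type*} [Group G] {H : Subgroup G}
    (hmal : ∀ g : G, g ∉ H → H ⊓ Subgroup.map (MulAut.conj g).toMonoidHom H = ⊥)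
    {ι : Type*} (r : ι → G) (hr : ∀ i, r i ∉ H) (hinj : Function.Injective (DoubleCoset.mk H H ∘ r))
    (hsurj : ∀ x ∉ H, ∃ i, DoubleCoset.mk H H (r i) = DoubleCoset.mk H H x) (α β : H ≃* H) :
    IsoAsGSets (G × G) (TwistedTensor α β)
      (((G × G) ⧸ twistedDiagonal H H (β.trans α)) ⊕ (Σ _ : ι, (G × G) ⧸ (⊥ : Subgroup (G × G)))) :=
  isoAsGSets_of_bijective
    ⟨twistedTensorOfSum_injective r hmal hr hinj, twistedTensorOfSum_surjective r hsurj⟩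
    (twistedTensorOfSum_smul r)

theorem statement16_general {G : Type*} [Group G] [Finite G] (H : Subgroup G)
    (hmal : ∀ g : G, g ∉ H → H ⊓ Subgroup.map (MulAut.conj g).toMonoidHom H = ⊥)
    (k : ℕ) (hk : k = Nat.card (DoubleCoset.Quotient (H : Set G) (H : Set G)) - 1)
    (α β : ↥H ≃* ↥H) :
    IsoAsGSets (G × G)
      (BisetTensor G G G ((G × G) ⧸ twistedDiagonal H H α) ((G × G) ⧸ twistedDiagonal H H β))
      (((G × G) ⧸ twistedDiagonal H H (β.trans α)) ⊕
        (Σ _ : Fin k, ((G × G) ⧸ (⊥ : Subgroup (G × G))))) := by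
  have : Finite (DoubleCoset.Quotient (H : Set G) H) := Quotient.finite _
  obtain ⟨r, hr, hinj, hsurj⟩ := exists_nontrivial_doubleCoset_transversal H
  subst hk
  exact isoAsGSets_twistedTensor_of_malnormal hmal r hr hinj hsurj α β

/-- for a self-normalizing-type (malnormal) subgroup `H` of `G`
(e.g. a Frobenius complement), with `k = |H\G/H| - 1`, one has
`((G×G)/Δ(H,α,H)) ×_G ((G×G)/Δ(H,β,H)) ≅ ((G×G)/Δ(H,αβ,H)) ⊔ (k copies of G×G)`. -/
theorem statement16 {G : Type*} [Group G] [Finite G] (H : Subgroup G)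
    (hbot : H ≠ ⊥) (htop : H ≠ ⊤)
    (hmal : ∀ g : G, g ∉ H → H ⊓ Subgroup.map (MulAut.conj g).toMonoidHom H = ⊥)
    (k : ℕ) (hk : k = Nat.card (DoubleCoset.Quotient (H : Set G) (H : Set G)) - 1)
    (α β : ↥H ≃* ↥H) :
    IsoAsGSets (G × G)
      (BisetTensor G G G ((G × G) ⧸ twistedDiagonal H H α) ((G × G) ⧸ twistedDiagonal H H β))
      (((G × G) ⧸ twistedDiagonal H H (β.trans α)) ⊕
        (Σ _ : Fin k, ((G × G) ⧸ (⊥ : Subgroup (G × G))))) :=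
  statement16_general H hmal k hk α β
end
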